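/- For ρ > 0, n ∈ ℕ₀ and x ∈ (-1,1], the left-sided Riemann–Liouville fractional derivative of the generalized Jacobi function satisfies ᴿD₋^ρ { (1+x)^ρ P_n^{(-ρ,ρ)}(x) } = [Γ(n+ρ+1)/n!] P_n(x), where P_n is the Legendre polynomial. -/

import Mathlib

open Real Filter Set

/-- Left-sided Riemann–Liouville fractional integral of order `ρ` with base point `a`. -/
noncomputable def fracInt (a ρ : ℝ) (u : ℝ → ℝ) (x : ℝ) : ℝ :=
  (1 / Real.Gamma ρ) * ∫ y in a..x, u y * (x - y) ^ (ρ - 1)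

/-- Left-sided Caputo fractional derivative of order `μ ∈ (k-1,k)` with base point `a`. -/
noncomputable def caputoD (k : ℕ) (μ a : ℝ) (u : ℝ → ℝ) : ℝ → ℝ :=
  fracInt a ((k : ℝ) - μ) (iteratedDeriv k u)

/-- Left-sided Riemann–Liouville fractional derivative of order `μ ∈ (k-1,k)` with base point `a`. -/
noncomputable def rlD (k : ℕ) (μ a : ℝ) (u : ℝ → ℝ) : ℝ → ℝ :=
  iteratedDeriv k (fracInt a ((k : ℝ) - μ) u)

/-- Jacobi polynomial `P_n^{(α,β)}` for general real parameters, via the terminating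
hypergeometric representation. -/
noncomputable def jacobiP (n : ℕ) (α β : ℝ) (x : ℝ) : ℝ :=
  (1 / (n.factorial : ℝ)) * ∑ m ∈ Finset.range (n + 1),
    (n.choose m : ℝ) * (∏ i ∈ Finset.range (n - m), (α + m + 1 + i)) *
    (∏ i ∈ Finset.range m, (α + β + n + 1 + i)) * ((x - 1) / 2) ^ m

/-- Legendre polynomial. -/
noncomputable def legendreP (n : ℕ) (x : ℝ) : ℝ := jacobiP n 0 0 x

/-! Expanding about `x = -1` (the symmetry `P_n^{(α,β)}(-x) = (-1)^n P_n^{(β,α)}(x)`, a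
Chu–Vandermonde identity) writes `(1+x)^ρ P_n^{(-ρ,ρ)}(x)` as `∑ c_j (1+x)^(ρ+j)`. By the
Beta integral, `I^{k-ρ} (1+x)^(ρ+j) = Γ(ρ+j+1)/(j+k)! (1+x)^(j+k)` is a polynomial, and `k`
derivatives turn it into `Γ(ρ+j+1)/j! (1+x)^j`. As `Γ(ρ+j+1) (ρ+j+1)_{n-j} = Γ(n+ρ+1)` and
`j! (j+1)_{n-j} = n!`, the result is `Γ(n+ρ+1)/n!` times the same expansion with `α = β = 0`. -/

open Polynomial Finset intervalIntegral MeasureTheory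
open scoped Nat

theorem ascPochhammer_eval_eq_prod_range {R : Type*} [CommSemiring R] (n : ℕ) (r : R) :
    (ascPochhammer R n).eval r = ∏ j ∈ range n, (r + j) := by
  induction n with
  | zero => simp
  | succ n ih => simp [ascPochhammer_succ_right, ih, prod_range_succ]

theorem descPochhammer_int_smeval_eq_eval {R : Type*} [CommRing R] (n : ℕ) (r : R) :
    (descPochhammer ℤ n).smeval r = (descPochhammer R n).eval r := by
  rw [← aeval_eq_smeval, aeval_def, eval₂_eq_eval_map, descPochhammer_map]

-- Chu–Vandermonde for rising factorials, from the falling-factorial version in Mathlib.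
theorem ascPochhammer_eval_sub_eq_sum {R : Type*} [CommRing R] (a c : R) (N : ℕ) :
    (ascPochhammer R N).eval (c - a) = ∑ i ∈ range (N + 1),
      (-1) ^ i * (N.choose i : R) * (ascPochhammer R i).eval a *
        (ascPochhammer R (N - i)).eval (c + i) := by
  have h := Ring.descPochhammer_smeval_add N (Commute.all (-a) (c + N - 1))
  simp only [descPochhammer_int_smeval_eq_eval, Nat.sum_antidiagonal_eq_sum_range_succ_mk] at h
  rw [descPochhammer_eval_eq_ascPochhammer] at h
  convert h using 1
  · congr 1; ring
  · refine sum_congr rfl fun i hi => ?_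
    have hi : i ≤ N := mem_range_succ_iff.mp hi
    have hneg : (descPochhammer R i).eval (-a) = (-1) ^ i * (ascPochhammer R i).eval a := by
      rw [← neg_neg a, ascPochhammer_eval_neg_eq_descPochhammer, neg_neg, ← mul_assoc,
        ← mul_pow]
      simp
    rw [hneg, descPochhammer_eval_eq_ascPochhammer R _ (N - i), Nat.cast_sub hi]
    ring_nf

theorem ascPochhammer_eval_neg {R : Type*} [CommRing R] (s : R) (N : ℕ) :
    (ascPochhammer R N).eval (-s) = (-1) ^ N * (ascPochhammer R N).eval (s - N + 1) := by
  rw [ascPochhammer_eval_neg_eq_descPochhammer, descPochhammer_eval_eq_ascPochhammer]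

theorem ascPochhammer_eval_add {R : Type*} [CommSemiring R] (r : R) (m n : ℕ) :
    (ascPochhammer R (m + n)).eval r =
      (ascPochhammer R m).eval r * (ascPochhammer R n).eval (r + m) := by
  rw [← ascPochhammer_mul, eval_mul, eval_comp]; simp

-- The coefficient of `((x - 1) / 2) ^ j` in the symmetry `jacobiP_neg`.
theorem sum_choose_mul_choose_mul_ascPochhammer {R : Type*} [CommRing R] (α β : R) (n j : ℕ) :
    ∑ m ∈ range (n + 1), (-1) ^ m * ((n.choose m * m.choose j : ℕ) : R) *
        (ascPochhammer R (n - m)).eval (α + m + 1) * (ascPochhammer R m).eval (α + β + n + 1) =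
      (-1) ^ n * (n.choose j : R) * (ascPochhammer R (n - j)).eval (β + j + 1) *
        (ascPochhammer R j).eval (α + β + n + 1) := by
  rcases lt_or_ge n j with hnj | hjn
  · rw [Nat.choose_eq_zero_of_lt hnj]
    refine (sum_eq_zero fun m hm => ?_).trans (by simp)
    rw [Nat.choose_eq_zero_of_lt (n := m) (k := j) (by have := mem_range.mp hm; omega)]
    simp
  obtain ⟨N, rfl⟩ := Nat.exists_eq_add_of_le hjn
  set γ := α + β + ((j + N : ℕ) : R) + 1
  have hterm : ∀ i ∈ range (N + 1),
      (-1) ^ (j + i) * (((j + N).choose (j + i) * (j + i).choose j : ℕ) : R) *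
      (ascPochhammer R (j + N - (j + i))).eval (α + ((j + i : ℕ) : R) + 1) *
        (ascPochhammer R (j + i)).eval γ =
      ((-1) ^ j * ((j + N).choose j : R) * (ascPochhammer R j).eval γ) *
        ((-1) ^ i * (N.choose i : R) * (ascPochhammer R i).eval (γ + j) *
          (ascPochhammer R (N - i)).eval ((α + j + 1) + i)) := by
    intro i _
    rw [Nat.choose_mul (by omega), Nat.add_sub_cancel_left, Nat.add_sub_cancel_left,
      Nat.sub_add_eq, Nat.add_sub_cancel_left, ascPochhammer_eval_add]
    push_cast
    ring_nf
  rw [show j + N + 1 = j + (N + 1) by ring, sum_range_add,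
    sum_eq_zero fun m hm => by simp [Nat.choose_eq_zero_of_lt (mem_range.mp hm)], zero_add,
    sum_congr rfl hterm, ← mul_sum, ← ascPochhammer_eval_sub_eq_sum,
    show α + j + 1 - (γ + j) = -(β + ((j + N : ℕ) : R)) by simp only [γ]; ring,
    ascPochhammer_eval_neg, Nat.add_sub_cancel_left]
  push_cast
  ring_nf

theorem jacobiP_neg (n : ℕ) (α β x : ℝ) :
    jacobiP n α β (-x) = (-1) ^ n * jacobiP n β α x := by
  simp only [jacobiP, ← ascPochhammer_eval_eq_prod_range]
  set u := (x - 1) / 2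
  have hpow : ∀ m ∈ range (n + 1), ((-x - 1) / 2) ^ m =
      ∑ j ∈ range (n + 1), (-1) ^ m * (m.choose j : ℝ) * u ^ j := by
    intro m hm
    rw [show (-x - 1) / 2 = -(u + 1) by ring, neg_pow, add_pow, mul_sum]
    refine sum_subset (range_subset_range.mpr (by simpa using hm)) (fun j _ hj => ?_) |>.trans
      (sum_congr rfl fun j _ => by ring)
    simp [Nat.choose_eq_zero_of_lt (by simpa using hj : m < j)]
  calc _ = 1 / (n ! : ℝ) * ∑ j ∈ range (n + 1), (∑ m ∈ range (n + 1), (-1) ^ m *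
          ((n.choose m * m.choose j : ℕ) : ℝ) * (ascPochhammer ℝ (n - m)).eval (α + m + 1) *
            (ascPochhammer ℝ m).eval (α + β + n + 1)) * u ^ j := by
        simp_rw [sum_mul]
        rw [sum_comm]
        refine congrArg _ (sum_congr rfl fun m hm => ?_)
        rw [hpow m hm, mul_sum]
        exact sum_congr rfl fun j _ => by push_cast; ring
    _ = _ := by
        simp_rw [sum_choose_mul_choose_mul_ascPochhammer, mul_sum]
        exact sum_congr rfl fun j _ => by rw [add_comm β α]; ring

theorem jacobiP_eq_sum_one_add_pow (n : ℕ) (α β x : ℝ) :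
    jacobiP n α β x = ∑ m ∈ range (n + 1), ((-1) ^ n / n ! * n.choose m *
      (∏ i ∈ range (n - m), (β + m + 1 + i)) * (∏ i ∈ range m, (α + β + n + 1 + i)) *
        (-1 / 2) ^ m) * (1 + x) ^ m := by
  have h := jacobiP_neg n α β (-x)
  rw [neg_neg] at h
  calc jacobiP n α β x = (-1) ^ n * jacobiP n β α (-x) := h
    _ = _ := by
        rw [jacobiP, mul_sum, mul_sum]
        refine sum_congr rfl fun m _ => ?_
        rw [show (-x - 1) / 2 = -1 / 2 * (1 + x) by ring, mul_pow, add_comm β α]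
        ring

theorem Real.Gamma_mul_prod_range_add {s : ℝ} (hs : 0 < s) (m : ℕ) :
    Gamma s * ∏ i ∈ range m, (s + i) = Gamma (s + m) := by
  induction m with
  | zero => simp
  | succ m ih =>
    rw [prod_range_succ, ← mul_assoc, ih, Nat.cast_succ, ← add_assoc,
      Gamma_add_one (by positivity : s + (m : ℝ) ≠ 0)]
    ring

theorem integral_rpow_mul_sub_rpow {p q c : ℝ} (hp : 0 < p) (hq : 0 < q) (hc : 0 < c) :
    ∫ u in (0 : ℝ)..c, u ^ (p - 1) * (c - u) ^ (q - 1) =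
      Gamma p * Gamma q / Gamma (p + q) * c ^ (p + q - 1) := by
  apply Complex.ofReal_injective
  have h := Complex.betaIntegral_scaled p q hc
  rw [Complex.betaIntegral_eq_Gamma_mul_div _ _ (by simpa) (by simpa), mul_comm] at h
  push_cast
  rw [Complex.ofReal_cpow hc.le, ← Complex.Gamma_ofReal, ← Complex.Gamma_ofReal,
    ← Complex.Gamma_ofReal, ← intervalIntegral.integral_ofReal]
  push_cast
  rw [← h]
  refine integral_congr fun u hu => ?_
  rw [Set.uIcc_of_le hc.le] at hu
  rw [Complex.ofReal_cpow hu.1, Complex.ofReal_cpow (by linarith [hu.2])]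
  push_cast
  rfl

theorem fracInt_congr {a σ x : ℝ} {f g : ℝ → ℝ} (h : EqOn f g (uIcc a x)) :
    fracInt a σ f x = fracInt a σ g x := by
  unfold fracInt
  rw [integral_congr fun y hy => congrArg (· * (x - y) ^ (σ - 1)) (h hy)]

theorem fracInt_const_mul (a σ c : ℝ) (f : ℝ → ℝ) (x : ℝ) :
    fracInt a σ (fun y => c * f y) x = c * fracInt a σ f x := by
  simp only [fracInt, mul_assoc, intervalIntegral.integral_const_mul]
  ring

theorem fracInt_finset_sum {ι : Type*} {a σ x : ℝ} (s : Finset ι) {f : ι → ℝ → ℝ}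
    (hf : ∀ i ∈ s, IntervalIntegrable (fun y => f i y * (x - y) ^ (σ - 1)) volume a x) :
    fracInt a σ (fun y => ∑ i ∈ s, f i y) x = ∑ i ∈ s, fracInt a σ (f i) x := by
  simp only [fracInt, sum_mul, intervalIntegral.integral_finsetSum hf, mul_sum]

theorem intervalIntegrable_sub_rpow_mul_sub_rpow {a s σ : ℝ} (hs : 0 ≤ s) (hσ : 0 < σ)
    (x : ℝ) : IntervalIntegrable (fun y => (y - a) ^ s * (x - y) ^ (σ - 1)) volume a x := by
  have h := (intervalIntegrable_rpow' (a := x - a) (b := 0)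
    (by linarith : -1 < σ - 1)).comp_sub_left x
  rw [sub_sub_cancel, sub_zero] at h
  exact h.continuousOn_mul (by fun_prop (disch := intro; exact Or.inr hs))

theorem fracInt_sub_rpow {a s σ x : ℝ} (hs : -1 < s) (hσ : 0 < σ) (hx : a < x) :
    fracInt a σ (fun y => (y - a) ^ s) x =
      Gamma (s + 1) / Gamma (s + σ + 1) * (x - a) ^ (s + σ) := by
  have hshift := integral_comp_sub_right (fun u => u ^ s * (x - a - u) ^ (σ - 1)) a
    (a := a) (b := x)
  have hβ := integral_rpow_mul_sub_rpow (p := s + 1) (by linarith) hσ (sub_pos.mpr hx)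
  simp only [sub_self, sub_sub_sub_cancel_right] at hshift
  rw [add_sub_cancel_right] at hβ
  rw [fracInt, hshift, hβ, add_right_comm s 1 σ, add_sub_cancel_right]
  have hΓ := (Gamma_pos_of_pos hσ).ne'
  field_simp

theorem rlD_sub_rpow_mul_sum {k : ℕ} {a ρ x : ℝ} (hρ : 0 ≤ ρ) (hρk : ρ < k) (hx : a < x)
    (s : Finset ℕ) (c : ℕ → ℝ) :
    rlD k ρ a (fun y => (y - a) ^ ρ * ∑ j ∈ s, c j * (y - a) ^ j) x =
      ∑ j ∈ s, c j * (Gamma (ρ + j + 1) / j !) * (x - a) ^ j := by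
  have hσ : 0 < (k : ℝ) - ρ := by linarith
  have hfrac : EqOn (fracInt a (k - ρ) fun y => (y - a) ^ ρ * ∑ j ∈ s, c j * (y - a) ^ j)
      (fun z => ∑ j ∈ s, c j * (Gamma (ρ + j + 1) / (j + k)!) * (z - a) ^ (j + k))
      (Ioi a) := by
    intro z hz
    have hz : a < z := hz
    have hρj : ∀ j : ℕ, 0 ≤ ρ + j := fun j => by positivity
    calc _ = fracInt a (k - ρ) (fun y => ∑ j ∈ s, c j * (y - a) ^ (ρ + j)) z := by
          refine fracInt_congr fun y hy => ?_
          have hy : 0 ≤ y - a := by rw [uIcc_of_le hz.le] at hy; linarith [hy.1]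
          simp only [mul_sum]
          refine sum_congr rfl fun j _ => ?_
          rw [rpow_add_of_nonneg hy hρ (Nat.cast_nonneg j), rpow_natCast]
          ring
      _ = ∑ j ∈ s, c j * fracInt a (k - ρ) (fun y => (y - a) ^ (ρ + j)) z := by
          refine (fracInt_finset_sum s fun j _ => ?_).trans
            (sum_congr rfl fun j _ => fracInt_const_mul _ _ _ _ _)
          simpa only [mul_assoc] using
            (intervalIntegrable_sub_rpow_mul_sub_rpow (hρj j) hσ z).const_mul (c j)
      _ = _ := by
          refine sum_congr rfl fun j _ => ?_
          rw [fracInt_sub_rpow (by linarith [hρj j]) hσ hz,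
            show ρ + j + (k - ρ) = ((j + k : ℕ) : ℝ) by push_cast; ring, rpow_natCast,
            Gamma_nat_eq_factorial]
          ring
  rw [rlD, (hfrac.eventuallyEq_of_mem (isOpen_Ioi.mem_nhds hx)).iteratedDeriv_eq,
    iteratedDeriv_fun_sum fun j _ => by fun_prop]
  refine sum_congr rfl fun j _ => ?_
  rw [iteratedDeriv_const_mul_field, iteratedDeriv_comp_sub_const k (· ^ (j + k))]
  simp only [iteratedDeriv_pow, Nat.add_sub_cancel]
  rw [← Nat.factorial_mul_descFactorial (Nat.le_add_left k j), Nat.add_sub_cancel]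
  push_cast
  field_simp

theorem stmt9 (k : ℕ) (ρ : ℝ) (hρ : 0 < ρ) (hk : (k : ℝ) - 1 < ρ ∧ ρ < k) (n : ℕ)
    (x : ℝ) (hx : x ∈ Set.Ioc (-1 : ℝ) 1) :
    rlD k ρ (-1) (fun y => (1 + y) ^ ρ * jacobiP n (-ρ) ρ y) x
      = Real.Gamma (n + ρ + 1) / (n.factorial : ℝ) * legendreP n x := by
  have hbase : ∀ y : ℝ, 1 + y = y - -1 := fun y => by ring
  simp_rw [jacobiP_eq_sum_one_add_pow n (-ρ) ρ, hbase]
  rw [rlD_sub_rpow_mul_sum hρ.le hk.2 hx.1, legendreP, jacobiP_eq_sum_one_add_pow, mul_sum,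
    hbase]
  refine sum_congr rfl fun m hm => ?_
  have hmn : m ≤ n := mem_range_succ_iff.mp hm
  have hΓ : Gamma (ρ + m + 1) * ∏ i ∈ range (n - m), (ρ + m + 1 + i) =
      Gamma (n + ρ + 1) := by
    rw [Gamma_mul_prod_range_add (by positivity), Nat.cast_sub hmn]
    ring_nf
  have hfac : (m ! : ℝ) * ∏ i ∈ range (n - m), ((m : ℝ) + 1 + i) = n ! := by
    rw [← Gamma_nat_eq_factorial, Gamma_mul_prod_range_add (by positivity), Nat.cast_sub hmn,
      ← Gamma_nat_eq_factorial]
    ring_nf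
  simp only [neg_add_cancel, zero_add]
  rw [← hΓ, ← hfac]
  field_simp
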